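/- arXiv:1412.5428 — 2 statements merged into one kernel-verified Lean document; each statement's English description precedes it below -/
import Mathlib

section
/- Let w ∈ W^Γ, and suppose K ⊆ S is the union of two distinct orbits I, J ∈ S̄, and that l(sw) < l(w) for all s ∈ K. Then the parabolic subgroup W_K is finite, and writing w = ux with u ∈ W_K, x a distinguished right coset representative of W_K (i.e. l(sx) > l(x) for all s ∈ K) and l(w) = l(u) + l(x), one has u = w_K ∈ W^Γ and x ∈ W^Γ. -/
/-!
If every `s ∈ K` is a left descent of `w`, the exchange condition gives
`ℓ v + ℓ (v⁻¹ w) = ℓ w` for all `v ∈ W_K`. Hence lengths in `W_K` are bounded by `ℓ w`, so `W_K`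
is finite; and for `w = u x` with `x ∈ X_K`, taking `v = u s` shows that every `s ∈ K` is a right
descent of `u`, which forces `u` to be the longest element `w_K` (unique by the same identity).
An automorphism permuting `S` preserves length and maps `W_K` to itself, so it fixes `w_K`, and
then also `x = w_K⁻¹ w`.

The exchange condition comes from the reflection cocycle: `s i` acts on `W × ZMod 2` by
`(t, e) ↦ (s i t s i, e + [t = s i])`. These permutations satisfy the Coxeter relations, so the
parity of the number of occurrences of `t` in the left inversion sequence of a word depends only on
the element of `W` the word represents.
-/

open CoxeterSystem

/-- The subgroup of fixed points of a group `Γ` of automorphisms of `W`. -/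
def fixedSubgroup {W : Type*} [Group W] (Γ : Subgroup (MulAut W)) : Subgroup W where
  carrier := {w | ∀ γ ∈ Γ, γ w = w}
  one_mem' := fun γ _ => map_one γ
  mul_mem' := fun {a b} ha hb γ hγ => by rw [map_mul, ha γ hγ, hb γ hγ]
  inv_mem' := fun {a} ha γ hγ => by rw [map_inv, ha γ hγ]

/-- `I` is a `Γ`-orbit on the set `S` of simple reflections of `(W, S)` such that the
standard parabolic subgroup `W_I` generated by `I` is finite. -/
def IsFinParabolicOrbit {B W : Type*} [Group W] {M : CoxeterMatrix B}
    (cs : CoxeterSystem M W) (Γ : Subgroup (MulAut W)) (I : Set W) : Prop :=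
  (∃ s ∈ Set.range cs.simple, I = {t | ∃ γ ∈ Γ, γ s = t}) ∧
    Finite ↥(Subgroup.closure I)

/-- `w` is the longest element of the standard parabolic subgroup `W_I` generated by `I`. -/
def IsLongestIn {B W : Type*} [Group W] {M : CoxeterMatrix B}
    (cs : CoxeterSystem M W) (I : Set W) (w : W) : Prop :=
  w ∈ Subgroup.closure I ∧ ∀ u ∈ Subgroup.closure I, cs.length u ≤ cs.length w

namespace CoxeterSystem

variable {B W : Type*} [Group W] {M : CoxeterMatrix B} (cs : CoxeterSystem M W)

local prefix:100 "s" => cs.simple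
local prefix:100 "π" => cs.wordProd
local prefix:100 "ℓ" => cs.length
local prefix:100 "lis" => cs.leftInvSeq

open scoped Classical in
noncomputable def simplePerm (i : B) : Equiv.Perm (W × ZMod 2) :=
  Function.Involutive.toPerm (fun p => (s i * p.1 * s i, p.2 + if p.1 = s i then 1 else 0)) <| by
    rintro ⟨t, e⟩
    have hconj : s i * t * s i = s i ↔ t = s i := by
      constructor
      · intro h
        simpa [mul_assoc] using congrArg (fun x => s i * x * s i) h
      · rintro rfl; simp
    refine Prod.ext
      (by simp [mul_assoc, cs.simple_mul_simple_self, cs.simple_mul_simple_cancel_left]) ?_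
    simp only [hconj, add_assoc]
    split_ifs <;> simp [CharTwo.add_self_eq_zero]

open scoped Classical in
theorem count_map_conj_simple (i : B) (l : List W) (t : W) :
    (l.map (MulAut.conj (s i))).count t = l.count (s i * t * s i) := by
  conv_lhs => rw [show t = MulAut.conj (s i) (s i * t * s i) by simp [mul_assoc]]
  exact List.count_map_of_injective _ _ (MulAut.conj (s i)).injective _

open scoped Classical in
theorem prod_map_simplePerm_reverse_apply (ω : List B) (t : W) (e : ZMod 2) :
    (ω.reverse.map cs.simplePerm).prod (t, e) = ((π ω)⁻¹ * t * π ω, e + (lis ω).count t) := by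
  induction ω generalizing t e with
  | nil => simp
  | cons i ω ih =>
    simp only [List.reverse_cons, List.map_append, List.prod_append, List.map_singleton,
      List.prod_singleton, Equiv.Perm.mul_apply, simplePerm, Function.Involutive.coe_toPerm, ih,
      wordProd_cons, leftInvSeq, List.count_cons, count_map_conj_simple, mul_inv_rev, inv_simple,
      mul_assoc]
    refine Prod.ext rfl ?_
    simp only [beq_iff_eq, eq_comm (a := s i)]
    push_cast
    ring

theorem wordProd_alternatingWord_two_mul_add_one (i j : B) (k : ℕ) :
    π (alternatingWord i j (2 * k + 1)) = s j * (s i * s j) ^ k := by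
  rw [prod_alternatingWord_eq_mul_pow, if_neg (by simp), Nat.mul_add_div two_pos]
  simp

theorem prod_map_simplePerm_reverse_alternatingWord (i j : B) (n : ℕ) :
    ((alternatingWord j i (2 * n)).reverse.map cs.simplePerm).prod =
      (cs.simplePerm i * cs.simplePerm j) ^ n := by
  induction n with
  | zero => simp [alternatingWord]
  | succ n ih =>
    rw [show 2 * (n + 1) = 2 * n + 1 + 1 by ring, alternatingWord_succ, alternatingWord_succ]
    simp only [List.map_reverse] at ih
    simp [ih, pow_succ', mul_assoc]

-- The left inversion sequence of the braid word of length `2 * M i j` is periodic with period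
-- `M i j`, so every reflection occurs in it an even number of times.
open scoped Classical in
theorem isLiftable_simplePerm : M.IsLiftable cs.simplePerm := by
  intro i j
  set ω := alternatingWord j i (2 * M i j)
  have hper : (lis ω).drop (M i j) = (lis ω).take (M i j) := by
    refine List.ext_getElem (by simp [ω]; omega) fun k h₁ h₂ => ?_
    simp only [List.getElem_drop, List.getElem_take, ω]
    rw [getElem_leftInvSeq_alternatingWord, getElem_leftInvSeq_alternatingWord,
      wordProd_alternatingWord_two_mul_add_one, wordProd_alternatingWord_two_mul_add_one, pow_add,
      simple_mul_simple_pow, one_mul]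
    all_goals simp [ω] at h₁ h₂; omega
  have hcount (t : W) : ((lis ω).count t : ZMod 2) = 0 := by
    rw [← List.take_append_drop (M i j) (lis ω), List.count_append, hper]
    push_cast
    exact CharTwo.add_self_eq_zero _
  ext ⟨t, e⟩ : 2 <;>
  · rw [← prod_map_simplePerm_reverse_alternatingWord, prod_map_simplePerm_reverse_apply]
    simp [ω, prod_alternatingWord_eq_mul_pow, hcount]

open scoped Classical in
theorem count_leftInvSeq_eq_of_wordProd_eq {ω ω' : List B} (h : π ω = π ω') (t : W) :
    ((lis ω).count t : ZMod 2) = (lis ω').count t := by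
  let φ := cs.lift ⟨cs.simplePerm, cs.isLiftable_simplePerm⟩
  have hφ (ω : List B) : φ (π ω)⁻¹ = (ω.reverse.map cs.simplePerm).prod := by
    rw [← wordProd_reverse, wordProd, map_list_prod, List.map_map]
    congr 2
    funext i
    exact cs.lift_apply_simple cs.isLiftable_simplePerm i
  have := congrArg (fun w => (φ w⁻¹ (t, 0)).2) h
  simp only [hφ, prod_map_simplePerm_reverse_apply] at this
  simpa using this

open scoped Classical in
theorem simple_mem_leftInvSeq {ω : List B} {i : B}
    (hi : cs.IsLeftDescent (π ω) i) : s i ∈ lis ω := by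
  by_contra hmem
  obtain ⟨ω', hω', hπ⟩ := cs.exists_isReduced (s i * π ω)
  have hcount := cs.count_leftInvSeq_eq_of_wordProd_eq
    (show π ω = π (i :: ω') by rw [wordProd_cons, ← hπ, simple_mul_simple_cancel_left]) (s i)
  rw [List.count_eq_zero.2 hmem, leftInvSeq, List.count_cons_self, count_map_conj_simple,
    simple_mul_simple_self, one_mul] at hcount
  have hmem' : s i ∈ lis ω' := by
    by_contra h
    rw [List.count_eq_zero.2 h] at hcount
    simp at hcount
  have := (cs.isLeftInversion_of_mem_leftInvSeq hω' hmem').2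
  rw [← hπ, simple_mul_simple_cancel_left] at this
  exact lt_asymm hi this

theorem exists_eraseIdx_of_isLeftDescent {ω : List B} {i : B}
    (hi : cs.IsLeftDescent (π ω) i) : ∃ j < ω.length, s i * π ω = π (ω.eraseIdx j) := by
  obtain ⟨j, hj, hget⟩ := List.mem_iff_getElem.1 (cs.simple_mem_leftInvSeq hi)
  refine ⟨j, by simpa using hj, ?_⟩
  rw [← getD_leftInvSeq_mul_wordProd, List.getD_eq_getElem _ _ hj, hget]

theorem length_wordProd_eraseIdx_lt {ω : List B} {j : ℕ} (hj : j < ω.length) :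
    ℓ (π (ω.eraseIdx j)) < ω.length :=
  (cs.length_wordProd_le _).trans_lt (by rw [← List.length_eraseIdx_add_one hj]; omega)

theorem isLeftDescent_or_length_lt_of_length_mul {a b : W} {i : B}
    (hab : ℓ (a * b) = ℓ a + ℓ b) (h : cs.IsLeftDescent (a * b) i) :
    cs.IsLeftDescent a i ∨ ℓ (a⁻¹ * (s i * (a * b))) < ℓ b := by
  obtain ⟨α, hα, rfl⟩ := cs.exists_isReduced a
  obtain ⟨β, hβ, rfl⟩ := cs.exists_isReduced b
  rw [← wordProd_append] at hab h ⊢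
  obtain ⟨j, hj, hexch⟩ := cs.exists_eraseIdx_of_isLeftDescent h
  rw [List.length_append] at hj
  rcases lt_or_ge j α.length with hjα | hjα
  · left
    rw [List.eraseIdx_append_of_lt_length hjα, wordProd_append, wordProd_append, ← mul_assoc]
      at hexch
    rw [IsLeftDescent, mul_right_cancel hexch, hα.eq]
    exact cs.length_wordProd_eraseIdx_lt hjα
  · right
    rw [List.eraseIdx_append_of_length_le hjα] at hexch
    simp only [wordProd_append] at hexch ⊢
    rw [hexch, inv_mul_cancel_left, hβ.eq]
    exact cs.length_wordProd_eraseIdx_lt (by omega)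

theorem exists_reduced_word_of_mem_closure {K : Set W} (hK : K ⊆ Set.range cs.simple) {v : W}
    (hv : v ∈ Subgroup.closure K) :
    ∃ ω : List B, cs.IsReduced ω ∧ (∀ j ∈ ω, s j ∈ K) ∧ π ω = v := by
  have step (i : B) (hi : s i ∈ K) (v : W)
      (hv : ∃ ω : List B, cs.IsReduced ω ∧ (∀ j ∈ ω, s j ∈ K) ∧ π ω = v) :
      ∃ ω : List B, cs.IsReduced ω ∧ (∀ j ∈ ω, s j ∈ K) ∧ π ω = s i * v := by
    obtain ⟨ω, hω, hωK, rfl⟩ := hv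
    rcases cs.length_simple_mul (π ω) i with hup | hdown
    · refine ⟨i :: ω, ?_, List.forall_mem_cons.2 ⟨hi, hωK⟩, wordProd_cons ..⟩
      rw [IsReduced, wordProd_cons, hup, hω.eq, List.length_cons]
    · obtain ⟨j, hj, hexch⟩ :=
        cs.exists_eraseIdx_of_isLeftDescent (show cs.IsLeftDescent (π ω) i by
          rw [IsLeftDescent]; omega)
      refine ⟨ω.eraseIdx j, ?_, fun k hk => hωK k (List.mem_of_mem_eraseIdx hk), hexch.symm⟩
      have := List.length_eraseIdx_add_one hj
      rw [IsReduced, ← hexch]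
      rw [hω.eq] at hdown
      omega
  induction hv using Subgroup.closure_induction_left with
  | one => exact ⟨[], by simp [IsReduced], by simp, rfl⟩
  | mul_left x hx y _ ih =>
    obtain ⟨i, rfl⟩ := hK hx
    exact step i hx y ih
  | inv_mul_cancel x hx y _ ih =>
    obtain ⟨i, rfl⟩ := hK hx
    rw [inv_simple]
    exact step i hx y ih

theorem length_add_length_inv_mul_of_length_mul_lt {K : Set W}
    (hK : K ⊆ Set.range cs.simple) {w : W} (hw : ∀ r ∈ K, ℓ (r * w) < ℓ w) {v : W}
    (hv : v ∈ Subgroup.closure K) : ℓ v + ℓ (v⁻¹ * w) = ℓ w := by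
  obtain ⟨ω, hω, hωK, rfl⟩ := cs.exists_reduced_word_of_mem_closure hK hv
  clear hv
  induction ω with
  | nil => simp
  | cons i ω ih =>
    have hω' : cs.IsReduced ω := by simpa using hω.drop 1
    have hup : ℓ (s i * π ω) = ℓ (π ω) + 1 := by
      rw [← wordProd_cons, hω.eq, hω'.eq, List.length_cons]
    have ih := ih hω' fun j hj => hωK j (List.mem_cons_of_mem i hj)
    rw [wordProd_cons]
    rcases cs.isLeftDescent_or_length_lt_of_length_mul (a := π ω) (b := (π ω)⁻¹ * w)
      (by rw [mul_inv_cancel_left, ih]) (by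
        rw [IsLeftDescent, mul_inv_cancel_left]; exact hw _ (hωK i List.mem_cons_self))
      with hdesc | hshort
    · exact absurd hdesc (by rw [IsLeftDescent]; omega)
    · rw [mul_inv_cancel_left,
        show (π ω)⁻¹ * (s i * w) = (s i * π ω)⁻¹ * w by simp [mul_assoc, inv_simple]] at hshort
      have := cs.length_mul_le (s i * π ω) ((s i * π ω)⁻¹ * w)
      rw [mul_inv_cancel_left] at this
      omega

theorem finite_setOf_length_le [Finite B] (n : ℕ) : {w : W | ℓ w ≤ n}.Finite :=
  ((List.finite_length_le B n).image cs.wordProd).subset fun w hw => by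
    obtain ⟨ω, hω, rfl⟩ := cs.exists_isReduced w
    exact ⟨ω, by simpa [hω.eq] using hw, rfl⟩

theorem length_apply_le (γ : W ≃* W) (hγ : ∀ i, γ (s i) ∈ Set.range cs.simple) (w : W) :
    ℓ (γ w) ≤ ℓ w := by
  choose σ hσ using hγ
  obtain ⟨ω, hω, rfl⟩ := cs.exists_isReduced w
  have hmap : γ (π ω) = π (ω.map σ) := by
    simp only [wordProd, map_list_prod, List.map_map]
    congr 2
    funext i
    exact (hσ i).symm
  rw [hmap, hω.eq]
  exact (cs.length_wordProd_le _).trans (List.length_map _).le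

theorem length_apply_of_image_range_simple (γ : W ≃* W)
    (hγ : ⇑γ '' Set.range cs.simple = Set.range cs.simple) (w : W) : ℓ (γ w) = ℓ w := by
  refine le_antisymm (cs.length_apply_le γ (fun i => hγ ▸ ⟨_, ⟨i, rfl⟩, rfl⟩) w) ?_
  have hsymm (i : B) : γ.symm (s i) ∈ Set.range cs.simple := by
    obtain ⟨_, ⟨j, rfl⟩, hj⟩ := hγ.symm ▸ Set.mem_range_self (f := cs.simple) i
    exact ⟨j, by rw [← hj, MulEquiv.symm_apply_apply]⟩
  simpa using cs.length_apply_le γ.symm hsymm (γ w)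

theorem isLongestIn_of_mul {K : Set W} (hK : K ⊆ Set.range cs.simple) {u x : W}
    (hu : u ∈ Subgroup.closure K) (hdesc : ∀ r ∈ K, ℓ (r * (u * x)) < ℓ (u * x))
    (hx : ∀ r ∈ K, ℓ x < ℓ (r * x)) : IsLongestIn cs K u := by
  have hsplit := fun v hv => cs.length_add_length_inv_mul_of_length_mul_lt hK hdesc (v := v) hv
  have hright : ∀ r ∈ K, ℓ (r * u⁻¹) < ℓ u⁻¹ := by
    intro r hr
    obtain ⟨i, rfl⟩ := hK hr
    have h₁ := hsplit (u * s i) (mul_mem hu (Subgroup.subset_closure hr))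
    have h₂ := hsplit u hu
    rw [show (u * s i)⁻¹ * (u * x) = s i * x by simp [mul_assoc, inv_simple]] at h₁
    rw [inv_mul_cancel_left] at h₂
    rw [show s i * u⁻¹ = (u * s i)⁻¹ by simp [inv_simple], length_inv, length_inv]
    have := hx _ hr
    omega
  refine ⟨hu, fun v hv => ?_⟩
  have := cs.length_add_length_inv_mul_of_length_mul_lt hK hright hv
  rw [length_inv] at this
  omega

end CoxeterSystem

theorem IsLongestIn.eq {B W : Type*} [Group W] {M : CoxeterMatrix B} {cs : CoxeterSystem M W}
    {K : Set W} (hK : K ⊆ Set.range cs.simple) {u₁ u₂ : W} (h₁ : IsLongestIn cs K u₁)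
    (h₂ : IsLongestIn cs K u₂) : u₁ = u₂ := by
  have hdesc : ∀ r ∈ K, cs.length (r * u₁) < cs.length u₁ := by
    intro r hr
    obtain ⟨i, rfl⟩ := hK hr
    exact lt_of_le_of_ne (h₁.2 _ (mul_mem (Subgroup.subset_closure hr) h₁.1))
      (cs.length_simple_mul_ne u₁ i)
  have hsplit := cs.length_add_length_inv_mul_of_length_mul_lt hK hdesc h₂.1
  have := h₁.2 u₂ h₂.1
  have := h₂.2 u₁ h₁.1
  exact (inv_mul_eq_one.1 (cs.length_eq_zero_iff.1 (by omega))).symm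

theorem IsLongestIn.map {B W : Type*} [Group W] {M : CoxeterMatrix B} {cs : CoxeterSystem M W}
    {K : Set W} {γ : W ≃* W} (hγK : ∀ t ∈ K, γ t ∈ K) (hγ : ∀ w, cs.length (γ w) = cs.length w)
    {u : W} (hu : IsLongestIn cs K u) : IsLongestIn cs K (γ u) := by
  have hmap : (Subgroup.closure K).map γ.toMonoidHom ≤ Subgroup.closure K := by
    rw [MonoidHom.map_closure]
    exact Subgroup.closure_le _ |>.2 fun _ ⟨t, ht, h⟩ => h ▸ Subgroup.subset_closure (hγK t ht)
  exact ⟨hmap ⟨u, hu.1, rfl⟩, fun v hv => (hu.2 v hv).trans (hγ u).ge⟩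

theorem IsFinParabolicOrbit.subset_range_simple {B W : Type*} [Group W] {M : CoxeterMatrix B}
    {cs : CoxeterSystem M W} {Γ : Subgroup (MulAut W)}
    (hΓ : ∀ γ ∈ Γ, ⇑γ '' Set.range cs.simple = Set.range cs.simple) {I : Set W}
    (hI : IsFinParabolicOrbit cs Γ I) : I ⊆ Set.range cs.simple := by
  obtain ⟨⟨s₀, hs₀, rfl⟩, -⟩ := hI
  rintro _ ⟨γ, hγ, rfl⟩
  exact hΓ γ hγ ▸ Set.mem_image_of_mem γ hs₀

theorem IsFinParabolicOrbit.apply_mem {B W : Type*} [Group W] {M : CoxeterMatrix B}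
    {cs : CoxeterSystem M W} {Γ : Subgroup (MulAut W)} {I : Set W}
    (hI : IsFinParabolicOrbit cs Γ I) {γ : MulAut W} (hγ : γ ∈ Γ) {t : W} (ht : t ∈ I) :
    γ t ∈ I := by
  obtain ⟨⟨s₀, -, rfl⟩, -⟩ := hI
  obtain ⟨δ, hδ, rfl⟩ := ht
  exact ⟨γ * δ, mul_mem hγ hδ, rfl⟩

theorem coset_decomposition_fixed_general {B W : Type*} [Finite B] [Group W] {M : CoxeterMatrix B}
    (cs : CoxeterSystem M W) (Γ : Subgroup (MulAut W))
    (hΓ : ∀ γ ∈ Γ, ⇑γ '' Set.range cs.simple = Set.range cs.simple)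
    (w : W) (hw : w ∈ fixedSubgroup Γ)
    (I J : Set W) (hI : IsFinParabolicOrbit cs Γ I) (hJ : IsFinParabolicOrbit cs Γ J)
    (hdesc : ∀ s ∈ I ∪ J, cs.length (s * w) < cs.length w) :
    Finite ↥(Subgroup.closure (I ∪ J)) ∧
      ∀ u x : W, u ∈ Subgroup.closure (I ∪ J) →
        (∀ s ∈ I ∪ J, cs.length x < cs.length (s * x)) →
        w = u * x → cs.length w = cs.length u + cs.length x →
        IsLongestIn cs (I ∪ J) u ∧ u ∈ fixedSubgroup Γ ∧ x ∈ fixedSubgroup Γ := by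
  have hK := Set.union_subset (hI.subset_range_simple hΓ) (hJ.subset_range_simple hΓ)
  refine ⟨Set.Finite.to_subtype <| (cs.finite_setOf_length_le (cs.length w)).subset fun v hv =>
    Nat.le.intro (cs.length_add_length_inv_mul_of_length_mul_lt hK hdesc hv), ?_⟩
  rintro u x hu hx rfl -
  have hlong := cs.isLongestIn_of_mul hK hu hdesc hx
  have hfix (γ : MulAut W) (hγ : γ ∈ Γ) : γ u = u :=
    (hlong.map (fun t ht => ht.imp (hI.apply_mem hγ) (hJ.apply_mem hγ))
      (cs.length_apply_of_image_range_simple γ (hΓ γ hγ))).eq hK hlong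
  refine ⟨hlong, hfix, fun γ hγ => mul_left_cancel (a := u) ?_⟩
  calc u * γ x = γ (u * x) := by rw [map_mul, hfix γ hγ]
    _ = u * x := hw γ hγ

/-- if `w ∈ W^Γ`, `K = I ∪ J` for distinct `I, J ∈ S̄`, and `l(sw) < l(w)` for
all `s ∈ K`, then `W_K` is finite and in the decomposition `w = ux` (`u ∈ W_K`, `x ∈ X_K`,
`l(w) = l(u) + l(x)`) one has `u = w_K ∈ W^Γ` and `x ∈ W^Γ`. -/
theorem coset_decomposition_fixed {B W : Type*} [Finite B] [Group W] {M : CoxeterMatrix B}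
    (cs : CoxeterSystem M W) (Γ : Subgroup (MulAut W))
    (hΓ : ∀ γ ∈ Γ, ⇑γ '' Set.range cs.simple = Set.range cs.simple)
    (w : W) (hw : w ∈ fixedSubgroup Γ)
    (I J : Set W) (hI : IsFinParabolicOrbit cs Γ I) (hJ : IsFinParabolicOrbit cs Γ J)
    (hIJ : I ≠ J)
    (hdesc : ∀ s ∈ I ∪ J, cs.length (s * w) < cs.length w) :
    Finite ↥(Subgroup.closure (I ∪ J)) ∧
      ∀ u x : W, u ∈ Subgroup.closure (I ∪ J) →
        (∀ s ∈ I ∪ J, cs.length x < cs.length (s * x)) →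
        w = u * x → cs.length w = cs.length u + cs.length x →
        IsLongestIn cs (I ∪ J) u ∧ u ∈ fixedSubgroup Γ ∧ x ∈ fixedSubgroup Γ :=
  coset_decomposition_fixed_general cs Γ hΓ w hw I J hI hJ hdesc
end

section
/- The pair (W^Γ, {w_I : I ∈ S̄}) satisfies the Exchange Condition: let w ∈ W^Γ with λ(w) = p, let w = w_{J_1} ⋯ w_{J_p} with J_i ∈ S̄, and let I ∈ S̄ be such that λ(w_I w) ≤ λ(w). Then there exists i ∈ {1, …, p} such that w_I w = w_{J_1} ⋯ w_{J_{i-1}} w_{J_{i+1}} ⋯ w_{J_p}. -/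
open CoxeterSystem

/-- The word length of `w` with respect to a generating set `gen` consisting of
involutions: the least number of factors from `gen` whose product is `w`. -/
noncomputable def wordLength {W : Type*} [Group W] (gen : Set W) (w : W) : ℕ :=
  sInf {n : ℕ | ∃ L : List W, L.length = n ∧ (∀ x ∈ L, x ∈ gen) ∧ L.prod = w}

/-!
Tits' representation of `W` on pairs (reflection, sign) yields a cocycle `N(w, t) ∈ ZMod 2` with
`N(w, t) = 1` iff `t` is a left inversion of `w`, and `N(ab, t) = N(a, t) + N(b, a⁻¹ta)`. It gives
the strong exchange and deletion conditions, and the standard facts on a standard parabolic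
subgroup `W_I`: left inversions of elements of `W_I` lie in `W_I`, an element with no left descent
in `I` has no left inversion in `W_I`, and `w_I` is the only element of `W_I` having every element
of `I` as a left descent. As `Γ` permutes `S` and preserves length, if one element of an orbit `I`
is a left descent of a `Γ`-fixed element then all are; hence `w_I` is `Γ`-fixed and is the only
nontrivial `Γ`-fixed element of `W_I`.

If some `s ∈ I` is a left descent of `w = w_{J_1} ⋯ w_{J_p}`, let `a w_{J_i}` be the shortest
prefix of the product having `s` as a left descent. The cocycle gives `a⁻¹ I a ⊆ W_{J_i}`, so
`a⁻¹ w_I a` is a nontrivial `Γ`-fixed element of `W_{J_i}`, i.e. equals `w_{J_i}`, and `w_I w`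
is the product with the `i`-th factor deleted. Otherwise every `s ∈ I` is a left descent of
`w_I w`, and the first case applied to a shortest expression of `w_I w` gives
`λ(w) < λ(w_I w)`.
-/

theorem wordLength_prod_le {W : Type*} [Group W] {gen : Set W} {L : List W}
    (hL : ∀ x ∈ L, x ∈ gen) : wordLength gen L.prod ≤ L.length :=
  Nat.sInf_le ⟨L, rfl, hL, rfl⟩

theorem exists_length_eq_wordLength {W : Type*} [Group W] {gen : Set W} {L : List W}
    (hL : ∀ x ∈ L, x ∈ gen) :
    ∃ L' : List W, L'.length = wordLength gen L.prod ∧ (∀ x ∈ L', x ∈ gen) ∧ L'.prod = L.prod :=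
  Nat.sInf_mem (s := {n | ∃ L' : List W, L'.length = n ∧ (∀ x ∈ L', x ∈ gen) ∧ L'.prod = L.prod})
    ⟨_, L, rfl, hL, rfl⟩

namespace CoxeterSystem

open List Subgroup

variable {B W : Type*} [Group W] {M : CoxeterMatrix B} (cs : CoxeterSystem M W)

local prefix:100 "s" => cs.simple
local prefix:100 "π" => cs.wordProd
local prefix:100 "ℓ" => cs.length
local prefix:100 "lis" => cs.leftInvSeq

section TitsRepresentation

open scoped Classical

theorem prod_map_alternatingWord {G : Type*} [Monoid G] (f : B → G) (i j : B) (p : ℕ) :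
    ((alternatingWord i j (2 * p)).map f).prod = (f i * f j) ^ p := by
  induction p with
  | zero => simp [alternatingWord]
  | succ p ih =>
    rw [show 2 * (p + 1) = 2 * p + 1 + 1 by ring, alternatingWord_succ', alternatingWord_succ']
    simp [ih, pow_succ', mul_assoc]

theorem even_count_leftInvSeq_braid (i j : B) (t : W) :
    Even ((lis (alternatingWord i j (2 * M i j))).count t) := by
  set L := lis (alternatingWord i j (2 * M i j))
  have hL : L.length = 2 * M i j := by simp [L]
  have hdrop : L.drop (M i j) = L.take (M i j) := by
    apply ext_getElem (by simp [hL]; omega)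
    intro k h₁ h₂
    simp only [L, getElem_drop, getElem_take]
    rw [getElem_leftInvSeq_alternatingWord _ _ _ _ _ (by simp [hL] at h₁; omega),
      getElem_leftInvSeq_alternatingWord _ _ _ _ _ (by simp [hL] at h₂; omega),
      prod_alternatingWord_eq_mul_pow, prod_alternatingWord_eq_mul_pow,
      show (2 * (M i j + k) + 1) / 2 = M i j + k by omega, show (2 * k + 1) / 2 = k by omega,
      pow_add, M.symmetric, simple_mul_simple_pow, one_mul]
    simp
  rw [← take_append_drop (M i j) L, count_append, hdrop]
  exact ⟨_, rfl⟩

noncomputable def simpleReflectionPerm (i : B) : Equiv.Perm (W × ZMod 2) :=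
  Function.Involutive.toPerm (fun x => (s i * x.1 * s i, x.2 + if x.1 = s i then 1 else 0)) <| by
    rintro ⟨t, e⟩
    have h : s i * (t * s i) = s i ↔ t = s i := by
      rw [← mul_assoc, mul_eq_right, mul_eq_one_iff_eq_inv', inv_simple]
    simp only [mul_assoc, simple_mul_simple_self, mul_one, simple_mul_simple_cancel_left, h]
    split_ifs <;> simp [add_assoc, ← two_mul, show (2 : ZMod 2) = 0 from rfl]

theorem simpleReflectionPerm_apply (i : B) (t : W) (e : ZMod 2) :
    cs.simpleReflectionPerm i (t, e) = (s i * t * s i, e + if t = s i then 1 else 0) :=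
  rfl

theorem prod_map_simpleReflectionPerm_apply (ω : List B) (t : W) (e : ZMod 2) :
    (ω.map cs.simpleReflectionPerm).prod (t, e) =
      (π ω * t * (π ω)⁻¹, e + (lis ω).count (π ω * t * (π ω)⁻¹)) := by
  induction ω with
  | nil => simp
  | cons i ω ih =>
    have hconj : π (i :: ω) * t * (π (i :: ω))⁻¹ = MulAut.conj (s i) (π ω * t * (π ω)⁻¹) := by
      simp [wordProd_cons, mul_assoc]
    rw [map_cons, prod_cons, Equiv.Perm.mul_apply, ih, hconj, leftInvSeq.eq_2, count_cons,
      count_map_of_injective _ _ (MulAut.conj (s i)).injective]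
    simp only [simpleReflectionPerm_apply, MulAut.conj_apply, inv_simple, beq_iff_eq]
    have h : s i = s i * (π ω * t * (π ω)⁻¹) * s i ↔ π ω * t * (π ω)⁻¹ = s i := by
      rw [eq_comm, mul_eq_right, mul_eq_one_iff_eq_inv', inv_simple]
    simp only [h]
    split_ifs <;> simp [add_assoc]

/-- Tits' representation of `W` on pairs (reflection, sign). The braid relations hold because the
left inversion sequence of a braid word lists every element an even number of times. -/
noncomputable def reflectionRep : W →* Equiv.Perm (W × ZMod 2) :=
  cs.lift ⟨cs.simpleReflectionPerm, fun i j => by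
    ext ⟨t, e⟩ : 1
    have hπ : π (alternatingWord i j (2 * M i j)) = 1 := by
      simp [prod_alternatingWord_eq_mul_pow, simple_mul_simple_pow]
    rw [← prod_map_alternatingWord, prod_map_simpleReflectionPerm_apply, hπ,
      ZMod.natCast_eq_zero_iff_even.mpr (cs.even_count_leftInvSeq_braid i j _)]
    simp⟩

theorem reflectionRep_wordProd (ω : List B) :
    cs.reflectionRep (π ω) = (ω.map cs.simpleReflectionPerm).prod := by
  rw [wordProd, map_list_prod, map_map]
  congr 1
  exact map_congr_left fun i _ => cs.lift_apply_simple _ i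

noncomputable def invParity (w t : W) : ZMod 2 := (cs.reflectionRep w (w⁻¹ * t * w, 0)).2

theorem invParity_wordProd (ω : List B) (t : W) : cs.invParity (π ω) t = (lis ω).count t := by
  simp [invParity, reflectionRep_wordProd, prod_map_simpleReflectionPerm_apply, mul_assoc]

theorem reflectionRep_apply (w t : W) (e : ZMod 2) :
    cs.reflectionRep w (t, e) = (w * t * w⁻¹, e + cs.invParity w (w * t * w⁻¹)) := by
  obtain ⟨ω, -, rfl⟩ := cs.exists_isReduced w
  simp [invParity_wordProd, reflectionRep_wordProd, prod_map_simpleReflectionPerm_apply]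

theorem invParity_mul (a b t : W) :
    cs.invParity (a * b) t = cs.invParity a t + cs.invParity b (a⁻¹ * t * a) := by
  have h₁ : b * ((a * b)⁻¹ * t * (a * b)) * b⁻¹ = a⁻¹ * t * a := by group
  have h₂ : a * (a⁻¹ * t * a) * a⁻¹ = t := by group
  rw [invParity, map_mul, Equiv.Perm.mul_apply, reflectionRep_apply cs b, h₁, reflectionRep_apply,
    h₂, zero_add, add_comm]

theorem invParity_one (t : W) : cs.invParity 1 t = 0 := by
  simpa using cs.invParity_wordProd [] t

theorem invParity_simple_self (i : B) : cs.invParity (s i) (s i) = 1 := by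
  simpa using cs.invParity_wordProd [i] (s i)

theorem mem_leftInvSeq_of_invParity_eq_one {ω : List B} {t : W} (h : cs.invParity (π ω) t = 1) :
    t ∈ lis ω := by
  by_contra ht
  rw [invParity_wordProd, count_eq_zero.mpr ht] at h
  exact zero_ne_one h

end TitsRepresentation

theorem invParity_inv (w t : W) : cs.invParity w⁻¹ (w⁻¹ * t * w) = cs.invParity w t := by
  have h := cs.invParity_mul w w⁻¹ t
  rw [mul_inv_cancel, invParity_one] at h
  grind

theorem invParity_self {t : W} (ht : cs.IsReflection t) : cs.invParity t t = 1 := by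
  obtain ⟨x, i, rfl⟩ := ht
  have h₁ := cs.invParity_mul x (s i * x⁻¹) (x * s i * x⁻¹)
  have h₂ := cs.invParity_mul (s i) x⁻¹ (s i)
  have h₃ := cs.invParity_inv x (x * s i * x⁻¹)
  have e₁ : x * (s i * x⁻¹) = x * s i * x⁻¹ := (mul_assoc ..).symm
  have e₂ : x⁻¹ * (x * s i * x⁻¹) * x = s i := by group
  rw [e₁, e₂] at h₁
  rw [e₂] at h₃
  rw [inv_simple, simple_mul_simple_self, one_mul, invParity_simple_self] at h₂
  grind

theorem isLeftInversion_of_invParity_eq_one {w t : W} (h : cs.invParity w t = 1) :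
    cs.IsLeftInversion w t := by
  obtain ⟨ω, hω, rfl⟩ := cs.exists_isReduced w
  exact cs.isLeftInversion_of_mem_leftInvSeq hω (cs.mem_leftInvSeq_of_invParity_eq_one h)

theorem invParity_eq_one_iff {w t : W} : cs.invParity w t = 1 ↔ cs.IsLeftInversion w t := by
  refine ⟨cs.isLeftInversion_of_invParity_eq_one, fun ⟨ht, hlt⟩ => ?_⟩
  have h := cs.invParity_mul t (t * w) t
  rw [← mul_assoc, ht.mul_self, one_mul, inv_mul_cancel, one_mul, cs.invParity_self ht] at h
  have h' : cs.invParity (t * w) t ≠ 1 := fun h' => by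
    have := (cs.isLeftInversion_of_invParity_eq_one h').2
    rw [← mul_assoc, ht.mul_self, one_mul] at this
    omega
  rw [h, (by decide : ∀ x : ZMod 2, x ≠ 1 → 1 + x = 1) _ h']

theorem isLeftInversion_mul_iff (a b t : W) :
    cs.IsLeftInversion (a * b) t ↔
      Xor (cs.IsLeftInversion a t) (cs.IsLeftInversion b (a⁻¹ * t * a)) := by
  simp only [← invParity_eq_one_iff, invParity_mul]
  generalize cs.invParity a t = x
  generalize cs.invParity b (a⁻¹ * t * a) = y
  revert x y
  decide

theorem mem_leftInvSeq_of_isLeftInversion {ω : List B} {t : W}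
    (h : cs.IsLeftInversion (π ω) t) : t ∈ lis ω :=
  cs.mem_leftInvSeq_of_invParity_eq_one (cs.invParity_eq_one_iff.mpr h)

theorem exists_eraseIdx_of_isLeftInversion {ω : List B} {t : W}
    (h : cs.IsLeftInversion (π ω) t) : ∃ j < ω.length, t * π ω = π (ω.eraseIdx j) := by
  obtain ⟨j, hj, rfl⟩ := getElem_of_mem (cs.mem_leftInvSeq_of_isLeftInversion h)
  refine ⟨j, by simpa using hj, ?_⟩
  rw [← getD_eq_getElem _ 1, getD_leftInvSeq_mul_wordProd]

theorem exists_sublist_of_not_isReduced {ω : List B} (h : ¬cs.IsReduced ω) :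
    ∃ ω', ω' <+ ω ∧ ω'.length + 2 = ω.length ∧ π ω' = π ω := by
  induction ω with
  | nil => exact absurd (by simp [IsReduced]) h
  | cons i ω ih =>
    by_cases hω : cs.IsReduced ω
    · have hi : cs.IsLeftInversion (π ω) (s i) := by
        refine ⟨cs.isReflection_simple i, ?_⟩
        rcases cs.length_simple_mul (π ω) i with h' | h'
        · exact absurd (by rw [IsReduced, wordProd_cons, h', hω, length_cons]) h
        · omega
      obtain ⟨j, hj, he⟩ := cs.exists_eraseIdx_of_isLeftInversion hi
      exact ⟨ω.eraseIdx j, (eraseIdx_sublist ω j).cons i,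
        by rw [length_eraseIdx_of_lt hj, length_cons]; omega, by rw [wordProd_cons, he]⟩
    · obtain ⟨ω', hsub, hlen, hπ⟩ := ih hω
      exact ⟨i :: ω', hsub.cons_cons i, by simp [hlen], by rw [wordProd_cons, wordProd_cons, hπ]⟩

section Parabolic

variable {I : Set W}

theorem exists_wordProd_eq_of_mem_closure (hI : I ⊆ Set.range cs.simple) {x : W}
    (hx : x ∈ closure I) :
    ∃ ω : List B, (∀ i ∈ ω, s i ∈ I) ∧ π ω = x := by
  induction hx using closure_induction with
  | mem x hx =>
    obtain ⟨i, rfl⟩ := hI hx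
    exact ⟨[i], by simpa using hx, by simp⟩
  | one => exact ⟨[], by simp, rfl⟩
  | mul x y _ _ hx hy =>
    obtain ⟨α, hα, rfl⟩ := hx
    obtain ⟨β, hβ, rfl⟩ := hy
    exact ⟨α ++ β, fun i hi => (mem_append.mp hi).elim (hα i) (hβ i), wordProd_append ..⟩
  | inv x _ hx =>
    obtain ⟨α, hα, rfl⟩ := hx
    exact ⟨α.reverse, by simpa using hα, wordProd_reverse ..⟩

theorem exists_isReduced_of_mem_closure (hI : I ⊆ Set.range cs.simple) {x : W}
    (hx : x ∈ closure I) :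
    ∃ ω : List B, cs.IsReduced ω ∧ (∀ i ∈ ω, s i ∈ I) ∧ π ω = x := by
  classical
  have hex : ∃ n, ∃ ω : List B, ω.length = n ∧ (∀ i ∈ ω, s i ∈ I) ∧ π ω = x := by
    obtain ⟨ω, hω⟩ := cs.exists_wordProd_eq_of_mem_closure hI hx
    exact ⟨_, ω, rfl, hω⟩
  obtain ⟨ω, hlen, hωI, rfl⟩ := Nat.find_spec hex
  refine ⟨ω, by_contra fun hred => ?_, hωI, rfl⟩
  obtain ⟨ω', hsub, hlen', hπ⟩ := cs.exists_sublist_of_not_isReduced hred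
  exact Nat.find_min hex (by omega) ⟨ω', rfl, fun i hi => hωI i (hsub.subset hi), hπ⟩

theorem exists_isLeftInversion_of_mem_closure (hI : I ⊆ Set.range cs.simple) {x : W}
    (hx : x ∈ closure I) (hx₁ : x ≠ 1) : ∃ t ∈ I, cs.IsLeftInversion x t := by
  obtain ⟨_ | ⟨i, ω⟩, hω, hωI, rfl⟩ := cs.exists_isReduced_of_mem_closure hI hx
  · exact absurd rfl hx₁
  · exact ⟨s i, hωI i mem_cons_self,
      cs.isLeftInversion_of_mem_leftInvSeq hω (by simp [leftInvSeq])⟩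

theorem mem_closure_of_mem_leftInvSeq {ω : List B} (hω : ∀ i ∈ ω, s i ∈ I) {t : W}
    (ht : t ∈ lis ω) : t ∈ closure I := by
  induction ω generalizing t with
  | nil => simp at ht
  | cons i ω ih =>
    have hi : s i ∈ closure I := subset_closure (hω i mem_cons_self)
    rw [leftInvSeq.eq_2, mem_cons, mem_map] at ht
    obtain rfl | ⟨r, hr, rfl⟩ := ht
    · exact hi
    · rw [MulAut.conj_apply]
      exact mul_mem (mul_mem hi (ih (fun j hj => hω j (mem_cons_of_mem _ hj)) hr)) (inv_mem hi)

theorem mem_closure_of_isLeftInversion (hI : I ⊆ Set.range cs.simple) {x t : W}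
    (hx : x ∈ closure I) (ht : cs.IsLeftInversion x t) : t ∈ closure I := by
  obtain ⟨ω, hωI, rfl⟩ := cs.exists_wordProd_eq_of_mem_closure hI hx
  exact cs.mem_closure_of_mem_leftInvSeq hωI (cs.mem_leftInvSeq_of_isLeftInversion ht)

theorem not_isLeftInversion_of_mem_closure (hI : I ⊆ Set.range cs.simple) {w : W}
    (hw : ∀ t ∈ I, ¬cs.IsLeftInversion w t) {r : W} (hr : r ∈ closure I) :
    ¬cs.IsLeftInversion w r := by
  classical
  have hex : ∃ n, ∃ c ∈ closure I, ℓ (c * w) = n := ⟨_, 1, one_mem _, rfl⟩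
  -- `c * w` is a shortest element of the coset `W_I w`
  obtain ⟨c, hc, hcn⟩ := Nat.find_spec hex
  have hmin : ∀ r ∈ closure I, ¬cs.IsLeftInversion (c * w) r := fun r hr h =>
    Nat.find_min hex (hcn ▸ h.2) ⟨r * c, mul_mem hr hc, by rw [mul_assoc]⟩
  obtain rfl : c = 1 := by
    by_contra hc₁
    obtain ⟨t, ht, htc⟩ :=
      cs.exists_isLeftInversion_of_mem_closure hI (inv_mem hc) (inv_ne_one.mpr hc₁)
    refine hw t ht ?_
    have h := cs.isLeftInversion_mul_iff c⁻¹ (c * w) t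
    rw [inv_mul_cancel_left, inv_inv] at h
    exact h.mpr (Or.inl ⟨htc, hmin _ (mul_mem (mul_mem hc (subset_closure ht)) (inv_mem hc))⟩)
  simpa using hmin r hr

end Parabolic

section Longest

variable {cs} {I : Set W} {u : W}

theorem _root_.IsLongestIn.isLeftInversion (hu : IsLongestIn cs I u) {t : W}
    (ht : cs.IsReflection t) (htI : t ∈ closure I) : cs.IsLeftInversion u t :=
  ⟨ht, lt_of_le_of_ne (hu.2 _ (mul_mem htI hu.1)) (ht.length_mul_right_ne u)⟩

theorem _root_.IsLongestIn.inv (hu : IsLongestIn cs I u) : IsLongestIn cs I u⁻¹ :=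
  ⟨inv_mem hu.1, fun v hv => (cs.length_inv u).symm ▸ hu.2 v hv⟩

theorem _root_.IsLongestIn.ne_one (hI : I ⊆ Set.range cs.simple) (hu : IsLongestIn cs I u)
    {t : W} (ht : t ∈ I) : u ≠ 1 := by
  rintro rfl
  obtain ⟨i, rfl⟩ := hI ht
  simpa using hu.2 _ (subset_closure ht)

theorem _root_.IsLongestIn.eq_of_forall_isLeftInversion (hI : I ⊆ Set.range cs.simple)
    (hu : IsLongestIn cs I u) {a : W} (ha : a ∈ closure I)
    (hd : ∀ t ∈ I, cs.IsLeftInversion a t) : a = u := by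
  have h : ∀ t ∈ I, ¬cs.IsLeftInversion (a * u⁻¹) t := fun t ht h => by
    have hr : cs.IsReflection (a⁻¹ * t * a) := by simpa using (hd t ht).1.conj a⁻¹
    have hrI : a⁻¹ * t * a ∈ closure I := mul_mem (mul_mem (inv_mem ha) (subset_closure ht)) ha
    rcases (cs.isLeftInversion_mul_iff a u⁻¹ t).mp h with ⟨-, h'⟩ | ⟨-, h'⟩
    · exact h' (hu.inv.isLeftInversion hr hrI)
    · exact h' (hd t ht)
  by_contra hne
  obtain ⟨t, ht, h'⟩ := cs.exists_isLeftInversion_of_mem_closure hI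
    (mul_mem ha (inv_mem hu.1)) (mul_inv_eq_one.not.mpr hne)
  exact h t ht h'

theorem _root_.IsLongestIn.unique (hI : I ⊆ Set.range cs.simple) (hu : IsLongestIn cs I u)
    {u' : W} (hu' : IsLongestIn cs I u') : u' = u :=
  hu.eq_of_forall_isLeftInversion hI hu'.1 fun t ht => by
    obtain ⟨i, rfl⟩ := hI ht
    exact hu'.isLeftInversion (cs.isReflection_simple i) (subset_closure ht)

theorem _root_.IsLongestIn.mul_self (hI : I ⊆ Set.range cs.simple) (hu : IsLongestIn cs I u) :
    u * u = 1 :=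
  mul_eq_one_iff_eq_inv.mpr (hu.unique hI hu.inv).symm

theorem _root_.IsLongestIn.isLeftInversion_mul (hI : I ⊆ Set.range cs.simple)
    (hu : IsLongestIn cs I u) {w : W} (hw : ∀ t ∈ I, ¬cs.IsLeftInversion w t) {t : W}
    (ht : t ∈ I) : cs.IsLeftInversion (u * w) t := by
  have htI : t ∈ closure I := subset_closure ht
  obtain ⟨i, rfl⟩ := hI ht
  refine (cs.isLeftInversion_mul_iff u w _).mpr (Or.inl ⟨hu.isLeftInversion
    (cs.isReflection_simple i) htI, cs.not_isLeftInversion_of_mem_closure hI hw ?_⟩)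
  exact mul_mem (mul_mem (inv_mem hu.1) htI) hu.1

end Longest

theorem length_map_le {f : W →* W} (hf : ∀ i, f (s i) ∈ Set.range cs.simple) (w : W) :
    ℓ (f w) ≤ ℓ w := by
  choose g hg using hf
  obtain ⟨ω, hω, rfl⟩ := cs.exists_isReduced w
  have : f (π ω) = π (ω.map g) := by
    simp [wordProd, map_list_prod, map_map, Function.comp_def, hg]
  calc ℓ (f (π ω)) = ℓ (π (ω.map g)) := by rw [this]
    _ ≤ ω.length := by simpa using cs.length_wordProd_le (ω.map g)
    _ = ℓ (π ω) := hω.symm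

section Automorphism

variable {cs} {γ : MulAut W}

theorem mulAut_apply_simple_mem_range (hγ : ⇑γ '' Set.range cs.simple = Set.range cs.simple)
    (i : B) : γ (s i) ∈ Set.range cs.simple :=
  hγ ▸ Set.mem_image_of_mem γ (Set.mem_range_self i)

theorem length_mulAut_apply (hγ : ⇑γ '' Set.range cs.simple = Set.range cs.simple) (w : W) :
    ℓ (γ w) = ℓ w := by
  have hγ' : ⇑γ⁻¹ '' Set.range cs.simple = Set.range cs.simple := by
    nth_rw 1 [← hγ]
    simp [Set.image_image]
  refine le_antisymm (cs.length_map_le (f := γ.toMonoidHom) (mulAut_apply_simple_mem_range hγ) w) ?_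
  simpa using cs.length_map_le (f := (γ⁻¹).toMonoidHom) (mulAut_apply_simple_mem_range hγ') (γ w)

theorem IsReflection.mulAut_apply (hγ : ⇑γ '' Set.range cs.simple = Set.range cs.simple) {t : W}
    (ht : cs.IsReflection t) : cs.IsReflection (γ t) := by
  obtain ⟨x, i, rfl⟩ := ht
  obtain ⟨j, hj⟩ := mulAut_apply_simple_mem_range hγ i
  exact ⟨γ x, j, by simp [hj]⟩

theorem IsLeftInversion.mulAut_apply (hγ : ⇑γ '' Set.range cs.simple = Set.range cs.simple)
    {w t : W} (h : cs.IsLeftInversion w t) : cs.IsLeftInversion (γ w) (γ t) := by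
  refine ⟨IsReflection.mulAut_apply hγ h.1, ?_⟩
  rw [← map_mul, length_mulAut_apply hγ, length_mulAut_apply hγ]
  exact h.2

end Automorphism

section Orbit

variable {cs} {Γ : Subgroup (MulAut W)} {I : Set W}

theorem _root_.IsFinParabolicOrbit.subset_range
    (hΓ : ∀ γ ∈ Γ, ⇑γ '' Set.range cs.simple = Set.range cs.simple)
    (hI : IsFinParabolicOrbit cs Γ I) : I ⊆ Set.range cs.simple := by
  obtain ⟨⟨t₀, ht₀, rfl⟩, -⟩ := hI
  rintro _ ⟨γ, hγ, rfl⟩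
  exact hΓ γ hγ ▸ Set.mem_image_of_mem γ ht₀

theorem _root_.IsFinParabolicOrbit.nonempty (hI : IsFinParabolicOrbit cs Γ I) : I.Nonempty := by
  obtain ⟨⟨t₀, -, rfl⟩, -⟩ := hI
  exact ⟨t₀, 1, one_mem Γ, rfl⟩

theorem _root_.IsFinParabolicOrbit.apply_mem_s14 (hI : IsFinParabolicOrbit cs Γ I) {γ : MulAut W}
    (hγ : γ ∈ Γ) {t : W} (ht : t ∈ I) : γ t ∈ I := by
  obtain ⟨⟨t₀, -, rfl⟩, -⟩ := hI
  obtain ⟨γ', hγ', rfl⟩ := ht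
  exact ⟨γ * γ', mul_mem hγ hγ', rfl⟩

theorem _root_.IsFinParabolicOrbit.exists_apply_eq (hI : IsFinParabolicOrbit cs Γ I) {t t' : W}
    (ht : t ∈ I) (ht' : t' ∈ I) : ∃ γ ∈ Γ, γ t = t' := by
  obtain ⟨⟨t₀, -, rfl⟩, -⟩ := hI
  obtain ⟨γ, hγ, rfl⟩ := ht
  obtain ⟨γ', hγ', rfl⟩ := ht'
  exact ⟨γ' * γ⁻¹, mul_mem hγ' (inv_mem hγ), by simp⟩

theorem _root_.IsFinParabolicOrbit.apply_mem_closure (hI : IsFinParabolicOrbit cs Γ I)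
    {γ : MulAut W} (hγ : γ ∈ Γ) {x : W} (hx : x ∈ closure I) : γ x ∈ closure I :=
  (closure_le (K := (closure I).comap γ.toMonoidHom)).mpr
    (fun _ ht => subset_closure (hI.apply_mem_s14 hγ ht)) hx

theorem _root_.IsFinParabolicOrbit.isLeftInversion_of_mem_fixedSubgroup
    (hΓ : ∀ γ ∈ Γ, ⇑γ '' Set.range cs.simple = Set.range cs.simple)
    (hI : IsFinParabolicOrbit cs Γ I) {w : W} (hw : w ∈ fixedSubgroup Γ) {t t' : W} (ht : t ∈ I)
    (ht' : t' ∈ I) (h : cs.IsLeftInversion w t) : cs.IsLeftInversion w t' := by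
  obtain ⟨γ, hγ, rfl⟩ := hI.exists_apply_eq ht ht'
  simpa [hw γ hγ] using IsLeftInversion.mulAut_apply (hΓ γ hγ) h

theorem _root_.IsFinParabolicOrbit.mem_fixedSubgroup_of_isLongestIn
    (hΓ : ∀ γ ∈ Γ, ⇑γ '' Set.range cs.simple = Set.range cs.simple)
    (hI : IsFinParabolicOrbit cs Γ I) {u : W} (hu : IsLongestIn cs I u) :
    u ∈ fixedSubgroup Γ := fun γ hγ =>
  hu.unique (hI.subset_range hΓ) ⟨hI.apply_mem_closure hγ hu.1, fun v hv => by
    have := hu.2 _ (hI.apply_mem_closure (inv_mem hγ) hv)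
    rwa [length_mulAut_apply (hΓ _ (inv_mem hγ)), ← length_mulAut_apply (hΓ γ hγ) u] at this⟩

theorem _root_.IsFinParabolicOrbit.eq_of_mem_fixedSubgroup
    (hΓ : ∀ γ ∈ Γ, ⇑γ '' Set.range cs.simple = Set.range cs.simple)
    (hI : IsFinParabolicOrbit cs Γ I) {u : W} (hu : IsLongestIn cs I u) {v : W}
    (hv : v ∈ closure I) (hvΓ : v ∈ fixedSubgroup Γ) (hv₁ : v ≠ 1) : v = u := by
  obtain ⟨t, ht, hvt⟩ := cs.exists_isLeftInversion_of_mem_closure (hI.subset_range hΓ) hv hv₁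
  exact hu.eq_of_forall_isLeftInversion (hI.subset_range hΓ) hv fun t' ht' =>
    hI.isLeftInversion_of_mem_fixedSubgroup hΓ hvΓ ht ht' hvt

end Orbit

section Exchange

variable {cs} {Γ : Subgroup (MulAut W)}

theorem conj_eq_of_isLeftInversion_mul
    (hΓ : ∀ γ ∈ Γ, ⇑γ '' Set.range cs.simple = Set.range cs.simple) {I J : Set W}
    (hI : IsFinParabolicOrbit cs Γ I) (hJ : IsFinParabolicOrbit cs Γ J) {u v : W}
    (hu : IsLongestIn cs I u) (hv : IsLongestIn cs J v) {a : W} (ha : a ∈ fixedSubgroup Γ)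
    {t : W} (ht : t ∈ I) (hat : ¬cs.IsLeftInversion a t) (havt : cs.IsLeftInversion (a * v) t) :
    a⁻¹ * u * a = v := by
  have hvΓ := hJ.mem_fixedSubgroup_of_isLongestIn hΓ hv
  have hconj : ∀ t' ∈ I, a⁻¹ * t' * a ∈ closure J := fun t' ht' => by
    have h₀ : ¬cs.IsLeftInversion a t' := fun h =>
      hat (hI.isLeftInversion_of_mem_fixedSubgroup hΓ ha ht' ht h)
    rcases (cs.isLeftInversion_mul_iff a v t').mp
        (hI.isLeftInversion_of_mem_fixedSubgroup hΓ (mul_mem ha hvΓ) ht ht' havt)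
      with ⟨h, -⟩ | ⟨h, -⟩
    · exact absurd h h₀
    · exact cs.mem_closure_of_isLeftInversion (hJ.subset_range hΓ) hv.1 h
  have hmem : a⁻¹ * u * a ∈ closure J := by
    simpa using (closure_le (K := (closure J).comap (MulAut.conj a⁻¹).toMonoidHom)).mpr
      (fun t' ht' => by simpa using hconj t' ht') hu.1
  refine hJ.eq_of_mem_fixedSubgroup hΓ hv hmem
    (mul_mem (mul_mem (inv_mem ha) (hI.mem_fixedSubgroup_of_isLongestIn hΓ hu)) ha) ?_
  intro h
  apply hu.ne_one (hI.subset_range hΓ) ht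
  calc u = a * (a⁻¹ * u * a) * a⁻¹ := by group
    _ = 1 := by rw [h, mul_one, mul_inv_cancel]

theorem exists_mul_prod_eq_prod_eraseIdx
    (hΓ : ∀ γ ∈ Γ, ⇑γ '' Set.range cs.simple = Set.range cs.simple) {L : List W}
    (hL : ∀ x ∈ L, ∃ J, IsFinParabolicOrbit cs Γ J ∧ IsLongestIn cs J x) {I : Set W}
    (hI : IsFinParabolicOrbit cs Γ I) {u : W} (hu : IsLongestIn cs I u) {t : W} (ht : t ∈ I)
    (h : cs.IsLeftInversion L.prod t) : ∃ i < L.length, u * L.prod = (L.eraseIdx i).prod := by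
  induction L using reverseRecOn with
  | nil => simp [IsLeftInversion] at h
  | append_singleton L v ih =>
    have hL' : ∀ x ∈ L, ∃ J, IsFinParabolicOrbit cs Γ J ∧ IsLongestIn cs J x :=
      fun x hx => hL x (mem_append_left _ hx)
    obtain ⟨J, hJ, hv⟩ := hL v (mem_append_right _ (mem_singleton_self v))
    rw [prod_append, prod_singleton] at h ⊢
    by_cases hLt : cs.IsLeftInversion L.prod t
    · obtain ⟨i, hi, he⟩ := ih hL' hLt
      exact ⟨i, by simp; omega, by
        rw [eraseIdx_append_of_lt_length hi, prod_append, ← he, prod_singleton, mul_assoc]⟩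
    · have hLΓ : L.prod ∈ fixedSubgroup Γ := list_prod_mem fun x hx =>
        let ⟨J, hJ, hx⟩ := hL' x hx
        hJ.mem_fixedSubgroup_of_isLongestIn hΓ hx
      have hconj := conj_eq_of_isLeftInversion_mul hΓ hI hJ hu hv hLΓ ht hLt h
      refine ⟨L.length, by simp, ?_⟩
      rw [eraseIdx_append_of_length_le le_rfl, Nat.sub_self, eraseIdx_cons_zero, append_nil,
        ← hconj]
      calc u * (L.prod * (L.prod⁻¹ * u * L.prod)) = (u * u) * L.prod := by group
        _ = L.prod := by rw [hu.mul_self (hI.subset_range hΓ), one_mul]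

end Exchange

end CoxeterSystem

theorem exchange_condition_general {B W : Type*} [Group W] {M : CoxeterMatrix B}
    (cs : CoxeterSystem M W) (Γ : Subgroup (MulAut W))
    (hΓ : ∀ γ ∈ Γ, ⇑γ '' Set.range cs.simple = Set.range cs.simple)
    (wI : Set W → W)
    (hwI : ∀ I : Set W, IsFinParabolicOrbit cs Γ I → IsLongestIn cs I (wI I))
    (w : W)
    (Js : List (Set W))
    (hJs : ∀ J ∈ Js, IsFinParabolicOrbit cs Γ J)
    (hprod : w = (Js.map wI).prod)
    (I : Set W) (hI : IsFinParabolicOrbit cs Γ I)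
    (hle : wordLength {x : W | ∃ I : Set W, IsFinParabolicOrbit cs Γ I ∧ x = wI I} (wI I * w) ≤
      wordLength {x : W | ∃ I : Set W, IsFinParabolicOrbit cs Γ I ∧ x = wI I} w) :
    ∃ i < Js.length, wI I * w = ((Js.eraseIdx i).map wI).prod := by
  set gen := {x : W | ∃ I : Set W, IsFinParabolicOrbit cs Γ I ∧ x = wI I}
  have hgen : ∀ x ∈ gen, ∃ J, IsFinParabolicOrbit cs Γ J ∧ IsLongestIn cs J x := by
    rintro _ ⟨J, hJ, rfl⟩
    exact ⟨J, hJ, hwI J hJ⟩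
  have hJs' : ∀ x ∈ wI I :: Js.map wI, x ∈ gen := by
    simp only [List.forall_mem_cons, List.forall_mem_map]
    exact ⟨⟨I, hI, rfl⟩, fun J hJ => ⟨J, hJs J hJ, rfl⟩⟩
  have hu := hwI I hI
  subst hprod
  by_cases hdesc : ∃ t ∈ I, cs.IsLeftInversion (Js.map wI).prod t
  · obtain ⟨t, ht, h⟩ := hdesc
    obtain ⟨i, hi, he⟩ := exists_mul_prod_eq_prod_eraseIdx hΓ
      (fun x hx => hgen x (hJs' x (List.mem_cons_of_mem _ hx))) hI hu ht h
    exact ⟨i, by simpa using hi, by rw [he, List.eraseIdx_map]⟩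
  · simp only [not_exists, not_and] at hdesc
    obtain ⟨L, hLlen, hLgen, hLprod⟩ := exists_length_eq_wordLength hJs'
    obtain ⟨t, ht⟩ := hI.nonempty
    rw [List.prod_cons] at hLlen hLprod
    have h : cs.IsLeftInversion L.prod t := hLprod ▸ hu.isLeftInversion_mul
      (hI.subset_range hΓ) hdesc ht
    obtain ⟨i, hi, he⟩ := exists_mul_prod_eq_prod_eraseIdx hΓ (fun x hx => hgen x (hLgen x hx))
      hI hu ht h
    rw [hLprod, ← mul_assoc, hu.mul_self (hI.subset_range hΓ), one_mul] at he
    have := wordLength_prod_le (gen := gen) fun x hx => hLgen x ((L.eraseIdx_sublist i).subset hx)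
    rw [← he, List.length_eraseIdx_of_lt hi] at this
    omega

/-- the pair `(W^Γ, {w_I : I ∈ S̄})` satisfies the Exchange Condition. -/
theorem exchange_condition {B W : Type*} [Finite B] [Group W] {M : CoxeterMatrix B}
    (cs : CoxeterSystem M W) (Γ : Subgroup (MulAut W))
    (hΓ : ∀ γ ∈ Γ, ⇑γ '' Set.range cs.simple = Set.range cs.simple)
    (wI : Set W → W)
    (hwI : ∀ I : Set W, IsFinParabolicOrbit cs Γ I → IsLongestIn cs I (wI I))
    (w : W) (hw : w ∈ fixedSubgroup Γ)
    (Js : List (Set W))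
    (hJs : ∀ J ∈ Js, IsFinParabolicOrbit cs Γ J)
    (hprod : w = (Js.map wI).prod)
    (hp : Js.length = wordLength {x : W | ∃ I : Set W, IsFinParabolicOrbit cs Γ I ∧ x = wI I} w)
    (I : Set W) (hI : IsFinParabolicOrbit cs Γ I)
    (hle : wordLength {x : W | ∃ I : Set W, IsFinParabolicOrbit cs Γ I ∧ x = wI I} (wI I * w) ≤
      wordLength {x : W | ∃ I : Set W, IsFinParabolicOrbit cs Γ I ∧ x = wI I} w) :
    ∃ i < Js.length, wI I * w = ((Js.eraseIdx i).map wI).prod :=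
  exchange_condition_general cs Γ hΓ wI hwI w Js hJs hprod I hI hle
end
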